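/- arXiv:2104.13441 — 6 statements merged into one kernel-verified Lean document; each statement's English description precedes it below -/
import Mathlib

section
/- Let s₁, s₂ ∈ ℝ^{4,2} be lightlike with ⟨s₁,p⟩ = ⟨s₂,p⟩ = 1 and ⟨s₁,s₂⟩ = −1, and let m, n be lightlike vectors orthogonal to s₁, s₂ and p with ⟨m,n⟩ ≠ 0 (two distinct points of the circle in which s₁ and s₂ intersect). Then the subspace W := {t ∈ ℝ^{4,2} : ⟨t, s₁+p⟩ = ⟨t, s₂+p⟩ = ⟨t,m⟩ = ⟨t,n⟩ = 0} is 2-dimensional, the form restricted to W has signature (1,1), and hence W contains a nonzero lightlike vector. (Fact: for any two points m, n of a circle, the contact elements of orthogonally intersecting spheres at m and at n share a common sphere, possibly after reversing orientation.) -/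
/-! The four vectors `s₁ + p`, `s₂ + p`, `m`, `n` have invertible Gram matrix (an orthonormal pair
orthogonal to a hyperbolic pair), so the functionals cutting out `W` are independent and
`dim W = 6 - 4 = 2`. The point sphere complex `p` lies in `W` and `⟨p,p⟩ < 0`. A nonzero `u ∈ W`
orthogonal to `p` is also orthogonal to `q = m / ⟨m,n⟩ - n`, and `p`, `q` span a negative definite
plane; its orthogonal complement in `ℝ^{4,2}` is positive definite, so `⟨u,u⟩ > 0`. Hence
`W = span {u, p}` has signature `(1,1)`, and `√(-⟨p,p⟩) u + √⟨u,u⟩ p` is lightlike. -/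

noncomputable section

/-- The vector space ℝ^{4,2}, modeled as `Fin 6 → ℝ`. -/
abbrev R42 : Type := Fin 6 → ℝ

/-- The symmetric bilinear form of signature (4,2) on ℝ^{4,2}. -/
def bform : R42 →ₗ[ℝ] R42 →ₗ[ℝ] ℝ :=
  LinearMap.mk₂ ℝ
    (fun x y => x 0 * y 0 + x 1 * y 1 + x 2 * y 2 + x 3 * y 3 - x 4 * y 4 - x 5 * y 5)
    (fun x x' y => by simp only [Pi.add_apply]; ring)
    (fun c x y => by simp only [Pi.smul_apply, smul_eq_mul]; ring)
    (fun x y y' => by simp only [Pi.add_apply]; ring)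
    (fun c x y => by simp only [Pi.smul_apply, smul_eq_mul]; ring)

/-- A lightlike vector: nonzero and isotropic. Represents an oriented 2-sphere. -/
def IsLightlike (v : R42) : Prop := v ≠ 0 ∧ bform v v = 0

/-- The Lie inversion with respect to the linear sphere complex determined by `a`. -/
def lieInv (a r : R42) : R42 := r - (2 * bform r a / bform a a) • a

open Module

namespace LinearMap.BilinForm

variable {V : Type*} [AddCommGroup V] [Module ℝ V] {B : LinearMap.BilinForm ℝ V}

theorem exists_ne_zero_isotropic_of_pos_of_neg (hB : B.IsSymm) {u v : V} (hu : 0 < B u u)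
    (hv : B v v < 0) (huv : B u v = 0) :
    ∃ a b : ℝ, a • u + b • v ≠ 0 ∧ B (a • u + b • v) (a • u + b • v) = 0 := by
  have hvu : B v u = 0 := hB.eq u v ▸ huv
  refine ⟨√(-B v v), √(B u u), fun h => ?_, ?_⟩
  · have h' := congrArg (B · v) h
    simp only [add_left, smul_left, huv, zero_left, mul_zero, zero_add] at h'
    exact (mul_ne_zero (Real.sqrt_pos.mpr hu).ne' hv.ne) h'
  · simp only [add_left, add_right, smul_left, smul_right, huv, hvu]
    linear_combination B u u * Real.mul_self_sqrt (neg_nonneg.mpr hv.le) +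
      B v v * Real.mul_self_sqrt hu.le

theorem apply_inv_smul_sub_self_eq_neg_two (hB : B.IsSymm) {m n : V} (hm : B m m = 0)
    (hn : B n n = 0) (hmn : B m n ≠ 0) : B ((B m n)⁻¹ • m - n) ((B m n)⁻¹ • m - n) = -2 := by
  simp only [sub_left, sub_right, smul_left, smul_right, hm, hn, ← hB.eq m n]
  field_simp
  ring

theorem linearIndependent_pair_of_apply_eq_zero (hB : B.IsSymm) {u v : V} (hu : B u u ≠ 0)
    (hv : B v v ≠ 0) (huv : B u v = 0) : LinearIndependent ℝ ![u, v] := by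
  refine linearIndependent_of_iIsOrtho (fun i j hij => ?_) (fun i => by fin_cases i <;> simpa)
  fin_cases i <;> fin_cases j <;> simp_all [Function.onFun, ← hB.eq u v]

variable [FiniteDimensional ℝ V]

theorem finrank_iInf_ker_flip_add_card {ι : Type*} [Fintype ι] [DecidableEq ι] (a e : ι → V)
    (he : ∀ i j, B (e i) (a j) = if i = j then 1 else 0) :
    finrank ℝ ↥(⨅ i, LinearMap.ker (LinearMap.flip B (a i))) + Fintype.card ι = finrank ℝ V := by
  set T := LinearMap.pi fun i => LinearMap.flip B (a i)
  have hT : Function.Surjective T := fun y =>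
    ⟨∑ i, y i • e i, funext fun j => by simp [T, he]⟩
  rw [← LinearMap.ker_pi, ← T.finrank_range_add_finrank_ker, LinearMap.range_eq_top.mpr hT,
    finrank_top, finrank_fintype_fun_eq_card, add_comm]

theorem finrank_inf_ker_flip_add_four (hB : B.IsSymm) {a b m n : V} (ha : B a a = 1)
    (hb : B b b = 1) (hab : B a b = 0) (ham : B a m = 0) (han : B a n = 0) (hbm : B b m = 0)
    (hbn : B b n = 0) (hm : B m m = 0) (hn : B n n = 0) (hmn : B m n ≠ 0) :
    finrank ℝ ↥(LinearMap.ker (LinearMap.flip B a) ⊓ LinearMap.ker (LinearMap.flip B b) ⊓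
      LinearMap.ker (LinearMap.flip B m) ⊓ LinearMap.ker (LinearMap.flip B n)) + 4 =
      finrank ℝ V := by
  have hdual := finrank_iInf_ker_flip_add_card (B := B) ![a, b, m, n]
    ![a, b, (B m n)⁻¹ • n, (B m n)⁻¹ • m] (by
      intro i j
      fin_cases i <;> fin_cases j <;>
        simp [*, hB.eq n m, hB.eq b a, hB.eq n a, hB.eq n b, hB.eq m a, hB.eq m b])
  rw [Fintype.card_fin] at hdual
  refine (congrArg (fun S : Submodule ℝ V => finrank ℝ S + 4) ?_).trans hdual
  ext x
  simp [Submodule.mem_iInf, Fin.forall_fin_succ, and_assoc]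

end LinearMap.BilinForm

namespace Submodule

variable {K V : Type*} [Field K] [AddCommGroup V] [Module K V] {W : Submodule K V}
  [FiniteDimensional K W]

theorem exists_mem_ne_zero_apply_eq_zero (hW : 1 < finrank K W) (f : V →ₗ[K] K) :
    ∃ u ∈ W, u ≠ 0 ∧ f u = 0 := by
  obtain ⟨w, hw, hw0⟩ := exists_mem_ne_zero_of_ne_bot
    ((f.domRestrict W).ker_ne_bot_of_finrank_lt (by rwa [finrank_self]))
  exact ⟨w, w.2, fun h => hw0 (Subtype.ext h), hw⟩

theorem eq_span_pair_of_finrank_eq_two (hW : finrank K W = 2) {u v : V} (hu : u ∈ W)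
    (hv : v ∈ W) (huv : LinearIndependent K ![u, v]) : W = span K {u, v} := by
  refine (eq_of_le_of_finrank_eq (span_le.mpr (Set.insert_subset hu (by simpa))) ?_).symm
  rw [hW, ← Matrix.range_cons_cons_empty u v ![], finrank_span_eq_card huv, Fintype.card_fin]

end Submodule

theorem bform_apply (x y : R42) :
    bform x y = x 0 * y 0 + x 1 * y 1 + x 2 * y 2 + x 3 * y 3 - x 4 * y 4 - x 5 * y 5 := rfl

theorem bform_isSymm : LinearMap.BilinForm.IsSymm bform :=
  ⟨fun x y => by simp only [bform_apply]; ring⟩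

theorem bform_self_pos_of_apply_four_eq_zero_of_apply_five_eq_zero {x : R42} (hx4 : x 4 = 0)
    (hx5 : x 5 = 0) (hx : x ≠ 0) : 0 < bform x x := by
  by_contra! hle
  rw [bform_apply, hx4, hx5] at hle
  have hsq (i : Fin 6) : 0 ≤ x i * x i := mul_self_nonneg (x i)
  refine hx (funext fun i => ?_)
  fin_cases i
  all_goals simp only [Fin.zero_eta, Fin.mk_one, Fin.reduceFinMk, Pi.zero_apply, hx4, hx5]
  all_goals exact mul_self_eq_zero.mp (by linarith [hsq 0, hsq 1, hsq 2, hsq 3])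

theorem exists_ne_zero_combination_apply_four_eq_zero_apply_five_eq_zero (u a b : R42) :
    ∃ c : Fin 3 → ℝ, c ≠ 0 ∧
      (c 0 • u + c 1 • a + c 2 • b) 4 = 0 ∧ (c 0 • u + c 1 • a + c 2 • b) 5 = 0 := by
  set L := (LinearMap.funLeft ℝ ℝ ![(4 : Fin 6), 5]).comp
    (Fintype.linearCombination ℝ ![u, a, b])
  obtain ⟨c, hc, hc0⟩ := Submodule.exists_mem_ne_zero_of_ne_bot
    (L.ker_ne_bot_of_finrank_lt (by simp))
  have hLc := funext_iff.mp (LinearMap.mem_ker.mp hc)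
  refine ⟨c, hc0, ?_, ?_⟩
  · simpa [L, Fintype.linearCombination_apply, Fin.sum_univ_three] using hLc 0
  · simpa [L, Fintype.linearCombination_apply, Fin.sum_univ_three] using hLc 1

theorem bform_self_pos_of_orthogonal {a b u : R42} (ha : bform a a < 0) (hb : bform b b < 0)
    (hab : bform a b = 0) (hua : bform u a = 0) (hub : bform u b = 0) (hu : u ≠ 0) :
    0 < bform u u := by
  -- Otherwise the form is negative semidefinite on `span {u, a, b}`, yet some nonzero vector of
  -- it lies in the positive definite subspace `{x | x 4 = 0 ∧ x 5 = 0}`.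
  by_contra! hle
  obtain ⟨c, hc0, hx4, hx5⟩ :=
    exists_ne_zero_combination_apply_four_eq_zero_apply_five_eq_zero u a b
  set x := c 0 • u + c 1 • a + c 2 • b
  have hba : bform b a = 0 := bform_isSymm.eq a b ▸ hab
  have hau : bform a u = 0 := bform_isSymm.eq u a ▸ hua
  have hbu : bform b u = 0 := bform_isSymm.eq u b ▸ hub
  have hxa : bform x a = c 1 * bform a a := by simp [x, hua, hba]
  have hxb : bform x b = c 2 * bform b b := by simp [x, hub, hab]
  have hxx : bform x x = c 0 ^ 2 * bform u u + c 1 ^ 2 * bform a a + c 2 ^ 2 * bform b b := by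
    simp only [x, map_add, map_smul, LinearMap.add_apply, LinearMap.smul_apply, smul_eq_mul,
      hua, hub, hau, hbu, hab, hba, mul_zero, add_zero, zero_add]
    ring
  have hx : x ≠ 0 := by
    intro hx
    have h1 : c 1 = 0 := by simpa [hx, ha.ne] using hxa
    have h2 : c 2 = 0 := by simpa [hx, hb.ne] using hxb
    have h0 : c 0 = 0 := by simpa [x, h1, h2, hu] using hx
    exact hc0 (funext fun i => by fin_cases i <;> assumption)
  have hpos := bform_self_pos_of_apply_four_eq_zero_of_apply_five_eq_zero hx4 hx5 hx
  linarith [mul_nonpos_of_nonneg_of_nonpos (sq_nonneg (c 0)) hle,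
    mul_nonpos_of_nonneg_of_nonpos (sq_nonneg (c 1)) ha.le,
    mul_nonpos_of_nonneg_of_nonpos (sq_nonneg (c 2)) hb.le]

open LinearMap.BilinForm

/-- For two points `m`, `n` of the circle in which the orthogonally
intersecting spheres `s₁`, `s₂` meet, the subspace
`W = {t : ⟨t,s₁+p⟩ = ⟨t,s₂+p⟩ = ⟨t,m⟩ = ⟨t,n⟩ = 0}` is 2-dimensional of signature
(1,1); hence it contains a nonzero lightlike vector: the contact elements of
orthogonal spheres at `m` and at `n` share a common sphere. -/
theorem stmt_2 (p s₁ s₂ m n : R42)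
    (hp : bform p p = -1)
    (hs₁ : IsLightlike s₁) (hs₂ : IsLightlike s₂)
    (hm : IsLightlike m) (hn : IsLightlike n)
    (hs₁p : bform s₁ p = 1) (hs₂p : bform s₂ p = 1) (hs₁s₂ : bform s₁ s₂ = -1)
    (hms₁ : bform m s₁ = 0) (hms₂ : bform m s₂ = 0) (hmp : bform m p = 0)
    (hns₁ : bform n s₁ = 0) (hns₂ : bform n s₂ = 0) (hnp : bform n p = 0)
    (hmn : bform m n ≠ 0)
    (W : Submodule ℝ R42)
    (hW : W = LinearMap.ker (bform.flip (s₁ + p)) ⊓ LinearMap.ker (bform.flip (s₂ + p)) ⊓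
          LinearMap.ker (bform.flip m) ⊓ LinearMap.ker (bform.flip n)) :
    Module.finrank ℝ W = 2 ∧
    (∃ u v : R42, u ∈ W ∧ v ∈ W ∧ 0 < bform u u ∧ bform v v < 0 ∧ bform u v = 0 ∧
      W = Submodule.span ℝ ({u, v} : Set R42)) ∧
    ∃ t ∈ W, t ≠ 0 ∧ bform t t = 0 := by
  have symm := bform_isSymm.eq
  have mem_W (t : R42) : t ∈ W ↔
      bform t (s₁ + p) = 0 ∧ bform t (s₂ + p) = 0 ∧ bform t m = 0 ∧ bform t n = 0 := by
    simp [hW, and_assoc]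
  have hrank : Module.finrank ℝ W = 2 := by
    have h := finrank_inf_ker_flip_add_four bform_isSymm (a := s₁ + p) (b := s₂ + p)
      ?_ ?_ ?_ ?_ ?_ ?_ ?_ hm.2 hn.2 hmn
    · rw [← hW, Module.finrank_fin_fun] at h
      omega
    all_goals simp [hs₁.2, hs₂.2, hs₁p, hs₂p, hs₁s₂, hp, symm p, symm s₂ s₁, symm s₁, symm s₂,
      hms₁, hms₂, hmp, hns₁, hns₂, hnp]
  have hpW : p ∈ W := (mem_W p).2 (by simp [hs₁p, hs₂p, hp, symm p, hmp, hnp])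
  obtain ⟨u, huW, hu0, hup⟩ := W.exists_mem_ne_zero_apply_eq_zero (by omega) (bform.flip p)
  replace hup : bform u p = 0 := hup
  obtain ⟨-, -, hum, hun⟩ := (mem_W u).1 huW
  have hu_pos : 0 < bform u u := by
    refine bform_self_pos_of_orthogonal (a := p) (b := (bform m n)⁻¹ • m - n) (by linarith)
      (by linarith [apply_inv_smul_sub_self_eq_neg_two bform_isSymm hm.2 hn.2 hmn]) ?_ hup ?_ hu0
    all_goals simp [symm p, hmp, hnp, hum, hun]
  obtain ⟨a, b, ht0, htt⟩ :=
    exists_ne_zero_isotropic_of_pos_of_neg bform_isSymm hu_pos (by linarith) hup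
  refine ⟨hrank, ⟨u, p, huW, hpW, hu_pos, by linarith, hup, ?_⟩,
    a • u + b • p, W.add_mem (W.smul_mem a huW) (W.smul_mem b hpW), ht0, htt⟩
  exact W.eq_span_pair_of_finrank_eq_two hrank huW hpW
    (linearIndependent_pair_of_apply_eq_zero bform_isSymm hu_pos.ne' (by linarith) hup)
end
end

section
/- Let s₁, t₁ ∈ ℝ^{4,2} be lightlike with ⟨s₁,t₁⟩ = −1 and ⟨s₁,p⟩ = ⟨t₁,p⟩ = 1, and let s₂, t₂ be lightlike. Suppose there exist λ₁, λ₂, λ₃, λ₄ ∈ ℝ with (λ₁,λ₂) ≠ (0,0) and λ₁s₁ + λ₂t₁ + λ₃s₂ + λ₄t₂ + p = 0. Then, for each choice of sign, setting c := (λ₁+λ₂) ± √(λ₁² + λ₂²), the vector k := λ₁s₁ + λ₂t₁ + c·p is nonzero, satisfies ⟨k,k⟩ = 0, and lies in span{s₁,t₁,p} ∩ span{s₂,t₂,p}. (Fact: if the span of s₁, s₂, t₁, t₂, p is at most 4-dimensional, the two circles determined by the sphere pairs (s₁,t₁) and (s₂,t₂) lie on a common sphere.) -/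
noncomputable section

lemma bform_symm (x y : R42) : bform x y = bform y x := by
  simp only [bform, LinearMap.mk₂_apply]; ring

/-- If `λ₁s₁ + λ₂t₁ + λ₃s₂ + λ₄t₂ + p = 0` with `(λ₁,λ₂) ≠ (0,0)`,
then for each sign `ε = ±1`, with `c = (λ₁+λ₂) + ε√(λ₁²+λ₂²)`, the vector
`k = λ₁s₁ + λ₂t₁ + c•p` is a nonzero lightlike vector lying in
`span {s₁,t₁,p} ∩ span {s₂,t₂,p}`: the two circles lie on a common sphere. -/
theorem stmt_3 (p s₁ t₁ s₂ t₂ : R42)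
    (hp : bform p p = -1)
    (hls₁ : IsLightlike s₁) (hlt₁ : IsLightlike t₁)
    (hls₂ : IsLightlike s₂) (hlt₂ : IsLightlike t₂)
    (hs₁t₁ : bform s₁ t₁ = -1) (hs₁p : bform s₁ p = 1) (ht₁p : bform t₁ p = 1)
    (lam₁ lam₂ lam₃ lam₄ : ℝ) (hlam : (lam₁, lam₂) ≠ (0, 0))
    (hrel : lam₁ • s₁ + lam₂ • t₁ + lam₃ • s₂ + lam₄ • t₂ + p = 0) :
    ∀ ε : ℝ, (ε = 1 ∨ ε = -1) →
      ∀ c : ℝ, c = (lam₁ + lam₂) + ε * Real.sqrt (lam₁ ^ 2 + lam₂ ^ 2) →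
        ∀ k : R42, k = lam₁ • s₁ + lam₂ • t₁ + c • p →
          k ≠ 0 ∧ bform k k = 0 ∧
          k ∈ Submodule.span ℝ ({s₁, t₁, p} : Set R42) ∧
          k ∈ Submodule.span ℝ ({s₂, t₂, p} : Set R42) := by
  intro ε hε c hc k hk
  have hsq : ε ^ 2 = 1 := by rcases hε with h | h <;> rw [h] <;> norm_num
  have hne : lam₁ ≠ 0 ∨ lam₂ ≠ 0 := by
    by_contra h
    push_neg at h
    exact hlam (by simp [h.1, h.2])
  have hl2 : (0 : ℝ) < lam₁ ^ 2 + lam₂ ^ 2 := by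
    rcases hne with h | h <;> positivity
  set S := Real.sqrt (lam₁ ^ 2 + lam₂ ^ 2) with hS
  have hS2 : S ^ 2 = lam₁ ^ 2 + lam₂ ^ 2 := Real.sq_sqrt hl2.le
  have hSpos : 0 < S := Real.sqrt_pos.mpr hl2
  have h1 : bform t₁ s₁ = -1 := by rw [bform_symm]; exact hs₁t₁
  have h2 : bform p s₁ = 1 := by rw [bform_symm]; exact hs₁p
  have h3 : bform p t₁ = 1 := by rw [bform_symm]; exact ht₁p
  have hkk : bform k k = -(c ^ 2) + 2 * c * (lam₁ + lam₂) - 2 * lam₁ * lam₂ := by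
    rw [hk]
    simp only [map_add, map_smul, LinearMap.add_apply, LinearMap.smul_apply, smul_eq_mul,
      hls₁.2, hlt₁.2, hp, hs₁t₁, hs₁p, ht₁p, h1, h2, h3]
    ring
  have hkk0 : bform k k = 0 := by
    rw [hkk, hc]
    linear_combination (-(S ^ 2)) * hsq - hS2
  have hkp : bform k p = lam₁ + lam₂ - c := by
    rw [hk]
    simp only [map_add, map_smul, LinearMap.add_apply, LinearMap.smul_apply, smul_eq_mul,
      hp, hs₁p, ht₁p]
    ring
  have hcne : lam₁ + lam₂ - c ≠ 0 := by
    rw [hc]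
    rcases hε with h | h <;> rw [h] <;> intro habs <;> nlinarith [hSpos]
  have hkne : k ≠ 0 := by
    intro h
    rw [h] at hkp
    simp only [map_zero, LinearMap.zero_apply] at hkp
    exact hcne hkp.symm
  refine ⟨hkne, hkk0, ?_, ?_⟩
  · rw [hk]
    have hm1 : s₁ ∈ Submodule.span ℝ ({s₁, t₁, p} : Set R42) :=
      Submodule.subset_span (by simp)
    have hm2 : t₁ ∈ Submodule.span ℝ ({s₁, t₁, p} : Set R42) :=
      Submodule.subset_span (by simp)
    have hm3 : p ∈ Submodule.span ℝ ({s₁, t₁, p} : Set R42) :=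
      Submodule.subset_span (by simp)
    exact Submodule.add_mem _ (Submodule.add_mem _ (Submodule.smul_mem _ _ hm1)
      (Submodule.smul_mem _ _ hm2)) (Submodule.smul_mem _ _ hm3)
  · have hk2 : k = (-lam₃) • s₂ + (-lam₄) • t₂ + (c - 1) • p := by
      rw [hk]
      funext i
      have h := congrFun hrel i
      simp only [Pi.add_apply, Pi.smul_apply, smul_eq_mul, Pi.zero_apply] at h ⊢
      linarith
    rw [hk2]
    have hm1 : s₂ ∈ Submodule.span ℝ ({s₂, t₂, p} : Set R42) :=
      Submodule.subset_span (by simp)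
    have hm2 : t₂ ∈ Submodule.span ℝ ({s₂, t₂, p} : Set R42) :=
      Submodule.subset_span (by simp)
    have hm3 : p ∈ Submodule.span ℝ ({s₂, t₂, p} : Set R42) :=
      Submodule.subset_span (by simp)
    exact Submodule.add_mem _ (Submodule.add_mem _ (Submodule.smul_mem _ _ hm1)
      (Submodule.smul_mem _ _ hm2)) (Submodule.smul_mem _ _ hm3)
end
end

section
/- Let k, s₁, s₂ ∈ ℝ^{4,2} be lightlike with ⟨s₁,p⟩ = ⟨s₂,p⟩ = ⟨k,p⟩ = 1 and ⟨s₁,k⟩ = ⟨s₂,k⟩ = −1 (so the spheres s₁ and s₂ intersect the sphere k orthogonally). Set a := s₁ − s₂ and ã := s₁ + σ_p(s₂), where σ_p(s₂) = s₂ + 2p. Then: (i) if ⟨s₁,s₂⟩ ≠ 0 then ⟨a,a⟩ = −2⟨s₁,s₂⟩ ≠ 0, ⟨a,p⟩ = 0, and the Lie inversion σ_a satisfies σ_a(p) = p, σ_a(k) = k, σ_a(s₁) = s₂ and σ_a(s₂) = s₁; (ii) if ⟨s₁,s₂⟩ ≠ −2 then ⟨ã,ã⟩ = 2(⟨s₁,s₂⟩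 + 2) ≠ 0, ⟨ã,p⟩ = 0, and σ_ã satisfies σ_ã(p) = p, σ_ã(k) = k, σ_ã(s₁) = −σ_p(s₂) and σ_ã(σ_p(s₂)) = −s₁. (Lemma: the two Ribaucour correspondences between two cospherical circles are induced by two M-Lie inversions that preserve the common sphere k and the point sphere complex p and interchange the two determining orthogonal spheres, up to orientation.) -/
noncomputable section

/-- The two Ribaucour correspondences between two cospherical circles
are induced by the two M-Lie inversions `σ_a` and `σ_aT`, where `a = s₁ - s₂` and
`aT = s₁ + σ_p(s₂)` with `σ_p(s₂) = s₂ + 2p`; both preserve the common sphere `k` and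
the point sphere complex `p` and interchange the determining orthogonal spheres,
up to orientation. -/
theorem stmt_4 (p k s₁ s₂ : R42)
    (hp : bform p p = -1)
    (hk : IsLightlike k) (hs₁ : IsLightlike s₁) (hs₂ : IsLightlike s₂)
    (hs₁p : bform s₁ p = 1) (hs₂p : bform s₂ p = 1) (hkp : bform k p = 1)
    (hs₁k : bform s₁ k = -1) (hs₂k : bform s₂ k = -1)
    (a aT : R42) (ha : a = s₁ - s₂) (haT : aT = s₁ + (s₂ + (2 : ℝ) • p)) :
    (bform s₁ s₂ ≠ 0 →
      bform a a = -2 * bform s₁ s₂ ∧ bform a a ≠ 0 ∧ bform a p = 0 ∧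
      lieInv a p = p ∧ lieInv a k = k ∧ lieInv a s₁ = s₂ ∧ lieInv a s₂ = s₁) ∧
    (bform s₁ s₂ ≠ -2 →
      bform aT aT = 2 * (bform s₁ s₂ + 2) ∧ bform aT aT ≠ 0 ∧ bform aT p = 0 ∧
      lieInv aT p = p ∧ lieInv aT k = k ∧
      lieInv aT s₁ = -(s₂ + (2 : ℝ) • p) ∧ lieInv aT (s₂ + (2 : ℝ) • p) = -s₁) := by
  obtain ⟨-, hkk⟩ := hk
  obtain ⟨-, h11⟩ := hs₁
  obtain ⟨-, h22⟩ := hs₂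
  have h21 : bform s₂ s₁ = bform s₁ s₂ := bform_symm _ _
  have hps₁ : bform p s₁ = 1 := by rw [bform_symm, hs₁p]
  have hps₂ : bform p s₂ = 1 := by rw [bform_symm, hs₂p]
  have hpk : bform p k = 1 := by rw [bform_symm, hkp]
  have hks₁ : bform k s₁ = -1 := by rw [bform_symm, hs₁k]
  have hks₂ : bform k s₂ = -1 := by rw [bform_symm, hs₂k]
  set c := bform s₁ s₂ with hc
  subst ha haT
  simp only [lieInv, map_add, map_sub, map_smul, LinearMap.add_apply, LinearMap.sub_apply,
    LinearMap.smul_apply, h11, h22, h21, hp, hps₁, hps₂, hpk, hks₁, hks₂, hs₁p, hs₂p, hkp,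
    hs₁k, hs₂k, ← hc, smul_eq_mul]
  norm_num only
  constructor
  · intro hne
    have hne2 : (-2:ℝ) * c ≠ 0 := mul_ne_zero (by norm_num) hne
    refine ⟨by ring, by rw [show (0:ℝ)-c-(c-0) = -2*c by ring]; exact hne2, trivial,
      by simp, by simp, ?_, ?_⟩
    · rw [show 2*(0-c)/((0:ℝ)-c-(c-0)) = 1 by rw [show (0:ℝ)-c-(c-0) = -2*c by ring, div_eq_iff hne2]; ring]
      module
    · rw [show 2*(c-0)/((0:ℝ)-c-(c-0)) = -1 by rw [show (0:ℝ)-c-(c-0) = -2*c by ring, div_eq_iff hne2]; ring]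
      module
  · intro hne
    have hne2 : (2:ℝ) * (c+2) ≠ 0 := mul_ne_zero (by norm_num) (fun h => hne (by linarith))
    refine ⟨by ring, by rw [show (0:ℝ)+(c+2)+(c+2+0) = 2*(c+2) by ring]; exact hne2, trivial,
      by simp, by simp, ?_, ?_⟩
    · rw [show 2*(0+(c+2))/((0:ℝ)+(c+2)+(c+2+0)) = 1 by rw [show (0:ℝ)+(c+2)+(c+2+0) = 2*(c+2) by ring, div_eq_iff hne2]; ring]
      module
    · rw [show 2*(c+2+0)/((0:ℝ)+(c+2)+(c+2+0)) = 1 by rw [show (0:ℝ)+(c+2)+(c+2+0) = 2*(c+2) by ring, div_eq_iff hne2]; ring]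
      module
end
end

section
/- Let r_i, r_j ∈ ℝ^{4,2} be lightlike and let n ∈ ℝ^{4,2} satisfy ⟨n,r_i⟩ ≠ 0, ⟨n,r_j⟩ ≠ 0 and ⟨r_i,r_j⟩ ≠ 0. Set a := ⟨n,r_i⟩r_j − ⟨n,r_j⟩r_i. Then ⟨a,a⟩ = −2⟨n,r_i⟩⟨n,r_j⟩⟨r_i,r_j⟩ ≠ 0, and the Lie inversion σ_a satisfies: σ_a(n) = n; σ_a(r_i) = (⟨n,r_i⟩/⟨n,r_j⟩)·r_j and σ_a(r_j) = (⟨n,r_j⟩/⟨n,r_i⟩)·r_i; and σ_a(v) = v for every v ∈ ℝ^{4,2} with ⟨v,r_i⟩ = ⟨v,r_j⟩ = 0. In particular every sphere in oriented contact with both r_i and r_j is preserved by σ_a. (Key construction in the characterization of discrete Ribaucour sphere congruences by flat connections.) -/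
noncomputable section

/-- For adjacent Ribaucour spheres `r_i`, `r_j` and
`a = ⟨n,r_i⟩r_j − ⟨n,r_j⟩r_i`, the Lie inversion `σ_a` fixes `n`, interchanges `r_i`
and `r_j` up to scale, and fixes every vector orthogonal to both `r_i` and `r_j`;
in particular every sphere in oriented contact with both is preserved. -/
theorem stmt_6 (n rI rJ : R42)
    (hrI : IsLightlike rI) (hrJ : IsLightlike rJ)
    (hnI : bform n rI ≠ 0) (hnJ : bform n rJ ≠ 0) (hIJ : bform rI rJ ≠ 0)
    (a : R42) (ha : a = bform n rI • rJ - bform n rJ • rI) :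
    bform a a = -2 * bform n rI * bform n rJ * bform rI rJ ∧
    bform a a ≠ 0 ∧
    lieInv a n = n ∧
    lieInv a rI = (bform n rI / bform n rJ) • rJ ∧
    lieInv a rJ = (bform n rJ / bform n rI) • rI ∧
    ∀ v : R42, bform v rI = 0 → bform v rJ = 0 → lieInv a v = v := by
  obtain ⟨-, hII⟩ := hrI
  obtain ⟨-, hJJ⟩ := hrJ
  have hJI : bform rJ rI = bform rI rJ := bform_symm rJ rI
  have haa : bform a a = -2 * bform n rI * bform n rJ * bform rI rJ := by
    subst ha
    simp only [map_sub, map_smul, LinearMap.sub_apply, LinearMap.smul_apply, smul_eq_mul,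
      hII, hJJ, hJI]
    ring
  have haa0 : bform a a ≠ 0 := by
    rw [haa]; positivity
  refine ⟨haa, haa0, ?_, ?_, ?_, ?_⟩
  · have hna : bform n a = 0 := by
      subst ha
      simp only [map_sub, map_smul, smul_eq_mul]
      ring
    rw [lieInv, hna]
    simp
  · have hIa : bform rI a = bform n rI * bform rI rJ := by
      subst ha
      simp only [map_sub, map_smul, smul_eq_mul, hII]
      ring
    rw [lieInv, hIa, haa]
    have : 2 * (bform n rI * bform rI rJ) / (-2 * bform n rI * bform n rJ * bform rI rJ)
        = -(1 / bform n rJ) := by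
      field_simp
    rw [this, ha]
    ext k
    simp only [Pi.sub_apply, Pi.smul_apply, smul_eq_mul]
    field_simp
    ring
  · have hJa : bform rJ a = -(bform n rJ * bform rI rJ) := by
      subst ha
      simp only [map_sub, map_smul, smul_eq_mul, hJJ, hJI]
      ring
    rw [lieInv, hJa, haa]
    have : 2 * -(bform n rJ * bform rI rJ) / (-2 * bform n rI * bform n rJ * bform rI rJ)
        = 1 / bform n rI := by
      field_simp
    rw [this, ha]
    ext k
    simp only [Pi.sub_apply, Pi.smul_apply, smul_eq_mul]
    field_simp
    ring
  · intro v hvI hvJ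
    have hva : bform v a = 0 := by
      subst ha
      simp only [map_sub, map_smul, smul_eq_mul, hvI, hvJ]
      ring
    rw [lieInv, hva]
    simp
end
end

section
/- Let p, q ∈ ℝ^{4,2} with ⟨p,p⟩ = −1, ⟨q,q⟩ = 1, ⟨p,q⟩ = 0, and let h⁺, h⁻ be lightlike vectors with ⟨h^±,p⟩ = ⟨h^±,q⟩ = 0 and ⟨h⁺,h⁻⟩ = −2. For any ρ ∈ ℝ set s^± := e^{±ρ}·h^± + (q ∓ p). Then ⟨s^±,s^±⟩ = 0, ⟨s⁺,s⁻⟩ = 0 (so span{s⁺,s⁻} is a 2-dimensional totally isotropic subspace, a contact element), ⟨s^±, q ∓ p⟩ = 0 (each s^± lies in the corresponding parabolic linear sphere complex), and moreover s⁺ + p = e^{ρ}h⁺ + q and s⁻ − p = e^{−ρ}h⁻ + q both lie in span{h⁺, h⁻, q}, so the contact element span{s⁺,s⁻} is orthogonal to the circle encoded by span{h⁺,h⁻,q}. (Converse construction in the theorem on discrete flat fronts: from a Darboux pair of hyperbolic Gauss maps one obtains a one-parameter family of contact elements, the parallel family of flat fronts, orthogonal to the associated cyclic circle congruence.) -/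
noncomputable section

/-- From a Darboux pair of hyperbolic Gauss maps `h^±` one obtains, for
every `ρ ∈ ℝ`, a contact element `span {s⁺, s⁻}` with `s^± = e^{±ρ}h^± + (q ∓ p)`,
each `s^±` lying in the corresponding parabolic linear sphere complex, and the contact
element is orthogonal to the circle encoded by `span {h⁺, h⁻, q}` since
`s⁺ + p` and `s⁻ − p` lie in that span. -/
theorem stmt_12 (p q hP hM : R42)
    (hp : bform p p = -1) (hq : bform q q = 1) (hpq : bform p q = 0)
    (hhP : IsLightlike hP) (hhM : IsLightlike hM)
    (hPp : bform hP p = 0) (hPq : bform hP q = 0)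
    (hMp : bform hM p = 0) (hMq : bform hM q = 0)
    (hPM : bform hP hM = -2) :
    ∀ ρ : ℝ, ∀ sP sM : R42,
      sP = Real.exp ρ • hP + (q - p) → sM = Real.exp (-ρ) • hM + (q + p) →
      bform sP sP = 0 ∧ bform sM sM = 0 ∧ bform sP sM = 0 ∧
      Module.finrank ℝ (Submodule.span ℝ ({sP, sM} : Set R42)) = 2 ∧
      bform sP (q - p) = 0 ∧ bform sM (q + p) = 0 ∧
      sP + p = Real.exp ρ • hP + q ∧ sM - p = Real.exp (-ρ) • hM + q ∧
      sP + p ∈ Submodule.span ℝ ({hP, hM, q} : Set R42) ∧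
      sM - p ∈ Submodule.span ℝ ({hP, hM, q} : Set R42) := by
  have comm : ∀ x y : R42, bform x y = bform y x := fun x y => by
    simp only [bform, LinearMap.mk₂_apply]; ring
  intro ρ sP sM hsP hsM
  obtain ⟨-, hPP⟩ := hhP
  obtain ⟨-, hMM⟩ := hhM
  have hE : Real.exp ρ * Real.exp (-ρ) = 1 := by
    rw [← Real.exp_add]; simp
  -- expand bilinear form
  have expand : ∀ (a b : ℝ) (u v w z : R42),
      bform (a • u + v) (b • w + z) =
        a * b * bform u w + a * bform u z + b * bform v w + bform v z := by
    intro a b u v w z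
    simp [map_add, map_smul, LinearMap.add_apply, LinearMap.smul_apply, smul_eq_mul]
    ring
  have hqp : bform q p = 0 := by rw [comm]; exact hpq
  have hqmp : bform (q - p) (q - p) = 0 := by
    simp [map_sub, LinearMap.sub_apply, hp, hq, hpq, hqp]
  have hqpp : bform (q + p) (q + p) = 0 := by
    simp [map_add, LinearMap.add_apply, hp, hq, hpq, hqp]
  have hmix : bform (q - p) (q + p) = 2 := by
    simp [map_add, map_sub, LinearMap.add_apply, LinearMap.sub_apply, hp, hq, hpq, hqp]
    ring
  have hPqm : bform hP (q - p) = 0 := by simp [map_sub, hPp, hPq]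
  have hPqp : bform hP (q + p) = 0 := by simp [map_add, hPp, hPq]
  have hMqm : bform hM (q - p) = 0 := by simp [map_sub, hMp, hMq]
  have hMqp : bform hM (q + p) = 0 := by simp [map_add, hMp, hMq]
  have hqmP : bform (q - p) hP = 0 := by rw [comm]; exact hPqm
  have hqpP : bform (q + p) hP = 0 := by rw [comm]; exact hPqp
  have hqmM : bform (q - p) hM = 0 := by rw [comm]; exact hMqm
  have hqpM : bform (q + p) hM = 0 := by rw [comm]; exact hMqp
  have h1 : bform sP sP = 0 := by
    rw [hsP, expand, hPP, hPqm, hqmP, hqmp]; ring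
  have h2 : bform sM sM = 0 := by
    rw [hsM, expand, hMM, hMqp, hqpM, hqpp]; ring
  have h3 : bform sP sM = 0 := by
    rw [hsP, hsM, expand, hPM, hPqp, hqmM, hmix]
    ring_nf
    rw [hE]; norm_num
  -- pairings for linear independence
  have hsPp : bform sP p = 1 := by
    rw [hsP]
    simp [map_add, map_sub, map_smul, LinearMap.add_apply, LinearMap.sub_apply,
      LinearMap.smul_apply, smul_eq_mul, hPp, hPq, hMp, hMq, hp, hq, hpq, hqp, hPP, hMM]
  have hsMp : bform sM p = -1 := by
    rw [hsM]
    simp [map_add, map_sub, map_smul, LinearMap.add_apply, LinearMap.sub_apply,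
      LinearMap.smul_apply, smul_eq_mul, hPp, hPq, hMp, hMq, hp, hq, hpq, hqp, hPP, hMM]
  have hsPq : bform sP q = 1 := by
    rw [hsP]
    simp [map_add, map_sub, map_smul, LinearMap.add_apply, LinearMap.sub_apply,
      LinearMap.smul_apply, smul_eq_mul, hPp, hPq, hMp, hMq, hp, hq, hpq, hqp, hPP, hMM]
  have hsMq : bform sM q = 1 := by
    rw [hsM]
    simp [map_add, map_sub, map_smul, LinearMap.add_apply, LinearMap.sub_apply,
      LinearMap.smul_apply, smul_eq_mul, hPp, hPq, hMp, hMq, hp, hq, hpq, hqp, hPP, hMM]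
  have hli : LinearIndependent ℝ ![sP, sM] := by
    rw [LinearIndependent.pair_iff]
    intro s t hst
    have h0 : bform (s • sP + t • sM) p = 0 := by rw [hst]; simp
    have h0' : bform (s • sP + t • sM) q = 0 := by rw [hst]; simp
    rw [map_add, map_smul, map_smul, LinearMap.add_apply, LinearMap.smul_apply,
      LinearMap.smul_apply, hsPp, hsMp, smul_eq_mul, smul_eq_mul] at h0
    rw [map_add, map_smul, map_smul, LinearMap.add_apply, LinearMap.smul_apply,
      LinearMap.smul_apply, hsPq, hsMq, smul_eq_mul, smul_eq_mul] at h0'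
    constructor <;> linarith
  have h4 : Module.finrank ℝ (Submodule.span ℝ ({sP, sM} : Set R42)) = 2 := by
    have h := finrank_span_eq_card hli
    have hr : Set.range ![sP, sM] = ({sP, sM} : Set R42) := by
      ext x; simp [Fin.exists_fin_two, or_comm]
    rw [hr] at h
    simpa using h
  have h5 : bform sP (q - p) = 0 := by
    rw [hsP]
    simp [map_add, map_sub, map_smul, LinearMap.add_apply, LinearMap.sub_apply,
      LinearMap.smul_apply, smul_eq_mul, hPp, hPq, hMp, hMq, hp, hq, hpq, hqp, hPP, hMM]
  have h6 : bform sM (q + p) = 0 := by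
    rw [hsM]
    simp [map_add, map_sub, map_smul, LinearMap.add_apply, LinearMap.sub_apply,
      LinearMap.smul_apply, smul_eq_mul, hPp, hPq, hMp, hMq, hp, hq, hpq, hqp, hPP, hMM]
  have h7 : sP + p = Real.exp ρ • hP + q := by rw [hsP]; abel
  have h8 : sM - p = Real.exp (-ρ) • hM + q := by rw [hsM]; abel
  have memP : hP ∈ Submodule.span ℝ ({hP, hM, q} : Set R42) :=
    Submodule.subset_span (by simp)
  have memM : hM ∈ Submodule.span ℝ ({hP, hM, q} : Set R42) :=
    Submodule.subset_span (by simp)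
  have memq : q ∈ Submodule.span ℝ ({hP, hM, q} : Set R42) :=
    Submodule.subset_span (by simp)
  have h9 : sP + p ∈ Submodule.span ℝ ({hP, hM, q} : Set R42) := by
    rw [h7]; exact Submodule.add_mem _ (Submodule.smul_mem _ _ memP) memq
  have h10 : sM - p ∈ Submodule.span ℝ ({hP, hM, q} : Set R42) := by
    rw [h8]; exact Submodule.add_mem _ (Submodule.smul_mem _ _ memM) memq
  exact ⟨h1, h2, h3, h4, h5, h6, h7, h8, h9, h10⟩
end
end

section
/- Let h⁺_i, h⁺_j, h⁻_i, h⁻_j ∈ ℝ^{4,2} be lightlike vectors such that h⁻_i − h⁻_j = λ·(h⁺_i − h⁺_j) for some real λ ≠ 0 (edge-parallel Königs dual lifts along an edge of a Darboux pair). Then ⟨h⁺_i, h⁻_i⟩ = ⟨h⁺_j, h⁻_j⟩. (Lemma used in the theorem on discrete flat fronts: for Königs dual lightlike lifts the pairing ⟨h⁺,h⁻⟩ is constant, so it can be normalized to −2 by a constant rescaling.) -/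
noncomputable section

/-- For edge-parallel (Königs dual) lightlike lifts `h⁺`, `h⁻` along an
edge, i.e. `h⁻_i − h⁻_j = λ(h⁺_i − h⁺_j)` with `λ ≠ 0`, the pairing is constant:
`⟨h⁺_i, h⁻_i⟩ = ⟨h⁺_j, h⁻_j⟩`. -/
theorem stmt_16 (hPi hPj hMi hMj : R42)
    (h₁ : IsLightlike hPi) (h₂ : IsLightlike hPj)
    (h₃ : IsLightlike hMi) (h₄ : IsLightlike hMj)
    (lam : ℝ) (hlam : lam ≠ 0)
    (hpar : hMi - hMj = lam • (hPi - hPj)) :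
    bform hPi hMi = bform hPj hMj := by
  have he : ∀ k, hMi k = hMj k + lam * (hPi k - hPj k) := by
    intro k
    have := congrFun hpar k
    simp [Pi.sub_apply, Pi.smul_apply, smul_eq_mul] at this
    linarith
  obtain ⟨-, e1⟩ := h₁
  obtain ⟨-, e2⟩ := h₂
  obtain ⟨-, e3⟩ := h₃
  obtain ⟨-, e4⟩ := h₄
  simp only [bform, LinearMap.mk₂_apply] at e1 e2 e3 e4 ⊢
  rw [he 0, he 1, he 2, he 3, he 4, he 5] at e3
  rw [he 0, he 1, he 2, he 3, he 4, he 5]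
  have key : lam * (hPi 0 * (hMj 0 + lam * (hPi 0 - hPj 0)) + hPi 1 * (hMj 1 + lam * (hPi 1 - hPj 1)) + hPi 2 * (hMj 2 + lam * (hPi 2 - hPj 2)) + hPi 3 * (hMj 3 + lam * (hPi 3 - hPj 3)) - hPi 4 * (hMj 4 + lam * (hPi 4 - hPj 4)) - hPi 5 * (hMj 5 + lam * (hPi 5 - hPj 5))) = lam * (hPj 0 * hMj 0 + hPj 1 * hMj 1 + hPj 2 * hMj 2 + hPj 3 * hMj 3 - hPj 4 * hMj 4 - hPj 5 * hMj 5) := by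
    linear_combination (1/2) * e3 - (1/2) * e4 + (lam^2/2) * e1 - (lam^2/2) * e2
  exact mul_left_cancel₀ hlam key
end
end
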